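/- arXiv:2103.16309 — 2 statements merged into one kernel-verified Lean document; each statement's English description precedes it below -/
import Mathlib

section
/- Assume that for every skew-symmetrizable initial matrix the sign-coherence property holds (every C-matrix of every pattern is column sign-coherent). Let B¹ = μ_k(B⁰) and let w be a path from t₀ to a vertex t, so that the path from the adjacent initial vertex t₁ to t is k·w (w with k prepended). Then the dual mutation formulas hold: C_t[B¹, k·w] = (J_k + [−ε B⁰]₊^{k•}) C_t[B⁰, w] and G_t[B¹, k·w] = (J_k + [ε B⁰]₊^{•k}) G_t[B⁰, w], where ε ∈ {1,−1} is the common sign of the nonzero entries of the k-th row of G_t[B⁰, w] (well-defined because G_t[B⁰, w] is row sign-coherent). -/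
open Matrix

namespace ClusterPattern

variable {ι : Type*} [Fintype ι] [DecidableEq ι]

/-- Entrywise positive part `[A]₊`. -/
def posPart (A : Matrix ι ι ℤ) : Matrix ι ι ℤ := Matrix.of fun i j => max (A i j) 0

/-- `A^{•k}`: all columns other than the `k`-th set to `0`. -/
def colSel (k : ι) (A : Matrix ι ι ℤ) : Matrix ι ι ℤ :=
  Matrix.of fun i j => if j = k then A i j else 0

/-- `A^{k•}`: all rows other than the `k`-th set to `0`. -/
def rowSel (k : ι) (A : Matrix ι ι ℤ) : Matrix ι ι ℤ :=
  Matrix.of fun i j => if i = k then A i j else 0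

/-- `J_k`: identity with `k`-th diagonal entry replaced by `-1`. -/
def Jmat (k : ι) : Matrix ι ι ℤ := Matrix.diagonal fun i => if i = k then -1 else 1

/-- A skew-symmetrizable integer matrix. -/
def IsSkewSymmetrizable (B : Matrix ι ι ℤ) : Prop :=
  ∃ D : ι → ℚ, (∀ i, 0 < D i) ∧ ∀ i j, D i * (B i j : ℚ) = -(D j * (B j i : ℚ))

/-- Matrix mutation `μ_k`. -/
def mutate (k : ι) (B : Matrix ι ι ℤ) : Matrix ι ι ℤ :=
  Matrix.of fun i j => if i = k ∨ j = k then -B i j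
    else B i j + B i k * max (B k j) 0 + max (-B i k) 0 * B k j

/-- The exchange matrix `B_t` at the vertex reached from `B0` along the path `w`. -/
def Bmat (B0 : Matrix ι ι ℤ) (w : List ι) : Matrix ι ι ℤ :=
  w.foldl (fun B k => mutate k B) B0

/-- One mutation step of a `C`-matrix. -/
def Cstep (B C : Matrix ι ι ℤ) (k : ι) : Matrix ι ι ℤ :=
  C * Jmat k + C * rowSel k (posPart B) + colSel k (posPart (-C)) * B

/-- One mutation step of a `G`-matrix. -/
def Gstep (B0 B C G : Matrix ι ι ℤ) (k : ι) : Matrix ι ι ℤ :=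
  G * Jmat k + G * colSel k (posPart (-B)) - B0 * colSel k (posPart (-C))

/-- The `C`-matrix `C_t` at the vertex reached from the initial matrix `B0` along `w`. -/
def Cmat (B0 : Matrix ι ι ℤ) (w : List ι) : Matrix ι ι ℤ :=
  (w.foldl (fun p k => (mutate k p.1, Cstep p.1 p.2 k))
    ((B0, 1) : Matrix ι ι ℤ × Matrix ι ι ℤ)).2

/-- The `G`-matrix `G_t` at the vertex reached from the initial matrix `B0` along `w`. -/
def Gmat (B0 : Matrix ι ι ℤ) (w : List ι) : Matrix ι ι ℤ :=
  (w.foldl (fun p k => (mutate k p.1, Cstep p.1 p.2.1 k, Gstep B0 p.1 p.2.1 p.2.2 k))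
    ((B0, 1, 1) : Matrix ι ι ℤ × Matrix ι ι ℤ × Matrix ι ι ℤ)).2.2

/-- A nonzero integer vector with all entries nonnegative. -/
def IsPositiveVec (v : ι → ℤ) : Prop := v ≠ 0 ∧ ∀ i, 0 ≤ v i

/-- A nonzero integer vector with all entries nonpositive. -/
def IsNegativeVec (v : ι → ℤ) : Prop := v ≠ 0 ∧ ∀ i, v i ≤ 0

/-- Every column is a positive or a negative vector. -/
def ColSignCoherent (M : Matrix ι ι ℤ) : Prop :=
  ∀ j, IsPositiveVec (fun i => M i j) ∨ IsNegativeVec (fun i => M i j)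

/-- Every row is a positive or a negative vector. -/
def RowSignCoherent (M : Matrix ι ι ℤ) : Prop :=
  ∀ i, IsPositiveVec (fun j => M i j) ∨ IsNegativeVec (fun j => M i j)

end ClusterPattern

/-!
Under sign-coherence a mutation step in direction `l` multiplies `C` on the right by
`Kmat l σ B_t` and `G` by `Lmat l (-σ) B_t`, where `σ` is the sign of the `l`-th column of `C`.
These factors are involutions, so `C` is unimodular and `Cᵀ D G = D` for a skew-symmetrizer `D`.

Tropical duality `G_t^{B;t₀} = (C_{t₀}^{B_tᵀ;t})ᵀ` and the `C`-half of the dual mutation formula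
are proved together by induction on the length of the path. Duality makes the rows of `G`
sign-coherent and, read backwards along the path, turns appending a mutation into prepending one.
The dual mutation step compares the `l`-th columns of the `C`-matrices seen from `t₀` and from
`t₁`, which differ only in row `k`; when that column is `±e_k`, `Cᵀ D G = D` and unimodularity
force the `k`-th row of `G` to be the same `±e_l`. The `G`-half of the formula is then the
transpose of an ordinary `C`-mutation step taken from the other end of the path.
-/

namespace ClusterPattern

section Entries

variable {ι : Type*}

@[simp] lemma posPart_apply (A : Matrix ι ι ℤ) (i j : ι) : posPart A i j = max (A i j) 0 := rfl

lemma transpose_posPart (A : Matrix ι ι ℤ) : (posPart A)ᵀ = posPart Aᵀ := rfl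

lemma posPart_neg_add_self (A : Matrix ι ι ℤ) : posPart (-A) + A = posPart A := by
  ext i j; simp only [Matrix.add_apply, posPart_apply, Matrix.neg_apply]
  linarith [max_zero_sub_max_neg_zero_eq_self (A i j)]

lemma posPart_smul_eq_posPart_neg_smul_add (ε : ℤ) (A : Matrix ι ι ℤ) :
    posPart (ε • A) = posPart ((-ε) • A) + ε • A := by
  ext i j; simp only [Matrix.add_apply, posPart_apply, Matrix.smul_apply, smul_eq_mul, neg_mul]
  linarith [max_zero_sub_max_neg_zero_eq_self (ε * A i j)]

variable [DecidableEq ι]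

@[simp] lemma rowSel_apply (k : ι) (A : Matrix ι ι ℤ) (i j : ι) :
    rowSel k A i j = if i = k then A i j else 0 := rfl

@[simp] lemma colSel_apply (k : ι) (A : Matrix ι ι ℤ) (i j : ι) :
    colSel k A i j = if j = k then A i j else 0 := rfl

lemma Jmat_apply (k i j : ι) : Jmat k i j = if i = j then (if i = k then -1 else 1) else 0 := by
  simp [Jmat, diagonal_apply]

lemma transpose_Jmat (k : ι) : (Jmat k)ᵀ = Jmat k := diagonal_transpose _

lemma transpose_rowSel (k : ι) (A : Matrix ι ι ℤ) : (rowSel k A)ᵀ = colSel k Aᵀ := by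
  ext i j; simp

lemma rowSel_add (k : ι) (A A' : Matrix ι ι ℤ) : rowSel k (A + A') = rowSel k A + rowSel k A' := by
  ext i j; by_cases h : i = k <;> simp [h]

lemma colSel_add (k : ι) (A A' : Matrix ι ι ℤ) : colSel k (A + A') = colSel k A + colSel k A' := by
  ext i j; by_cases h : j = k <;> simp [h]

end Entries

section Products

variable {ι : Type*} [Fintype ι]

lemma mul_apply_of_row_single {R : Type*} [NonUnitalNonAssocSemiring R] {X : Matrix ι ι R}
    {i l : ι} (hX : ∀ m ≠ l, X i m = 0) (Y : Matrix ι ι R) (j : ι) :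
    (X * Y) i j = X i l * Y l j := by
  rw [mul_apply, Finset.sum_eq_single l (fun m _ hm => by rw [hX m hm, zero_mul]) (by simp)]

lemma mul_apply_of_col_single {R : Type*} [NonUnitalNonAssocSemiring R] (X : Matrix ι ι R)
    {Y : Matrix ι ι R} {j l : ι} (hY : ∀ m ≠ l, Y m j = 0) (i : ι) :
    (X * Y) i j = X i l * Y l j := by
  rw [mul_apply, Finset.sum_eq_single l (fun m _ hm => by rw [hY m hm, mul_zero]) (by simp)]

variable [DecidableEq ι]

lemma mul_Jmat_apply (X : Matrix ι ι ℤ) (k i j : ι) :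
    (X * Jmat k) i j = if j = k then -X i j else X i j := by
  rw [Jmat, mul_diagonal]; split <;> ring

lemma Jmat_mul_apply (k : ι) (X : Matrix ι ι ℤ) (i j : ι) :
    (Jmat k * X) i j = if i = k then -X i j else X i j := by
  rw [Jmat, diagonal_mul]; split <;> ring

lemma Jmat_mul_Jmat (k : ι) : Jmat k * Jmat k = 1 := by
  rw [Jmat, diagonal_mul_diagonal, ← diagonal_one]
  congr 1; ext i; split <;> norm_num

lemma mul_rowSel_apply (X A : Matrix ι ι ℤ) (k i j : ι) :
    (X * rowSel k A) i j = X i k * A k j :=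
  (mul_apply_of_col_single (l := k) X (fun m hm => by simp [hm]) i).trans (by simp)

lemma colSel_mul_apply (A X : Matrix ι ι ℤ) (k i j : ι) :
    (colSel k A * X) i j = A i k * X k j :=
  (mul_apply_of_row_single (l := k) (fun m hm => by simp [hm]) X j).trans (by simp)

lemma colSel_mul (k : ι) (A X : Matrix ι ι ℤ) : colSel k A * X = A * rowSel k X := by
  ext i j; rw [colSel_mul_apply, mul_rowSel_apply]

lemma rowSel_mul (k : ι) (A X : Matrix ι ι ℤ) : rowSel k A * X = rowSel k (A * X) := by
  ext i j; by_cases h : i = k <;> simp [mul_apply, h]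

lemma mul_colSel (k : ι) (X A : Matrix ι ι ℤ) : X * colSel k A = colSel k (X * A) := by
  ext i j; by_cases h : j = k <;> simp [mul_apply, h]

end Products

section Mutation

variable {ι : Type*} [DecidableEq ι]

lemma mutate_apply_left (k : ι) (B : Matrix ι ι ℤ) (j : ι) : mutate k B k j = -B k j := by
  simp [mutate]

lemma mutate_apply_right (k : ι) (B : Matrix ι ι ℤ) (i : ι) : mutate k B i k = -B i k := by
  simp [mutate]

lemma mutate_apply_of_ne {k i j : ι} (B : Matrix ι ι ℤ) (hi : i ≠ k) (hj : j ≠ k) :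
    mutate k B i j = B i j + B i k * max (B k j) 0 + max (-B i k) 0 * B k j := by
  simp [mutate, hi, hj]

lemma mutate_mutate (k : ι) (B : Matrix ι ι ℤ) : mutate k (mutate k B) = B := by
  ext i j
  by_cases hi : i = k
  · subst hi; rw [mutate_apply_left, mutate_apply_left, neg_neg]
  by_cases hj : j = k
  · subst hj; rw [mutate_apply_right, mutate_apply_right, neg_neg]
  rw [mutate_apply_of_ne _ hi hj, mutate_apply_of_ne _ hi hj, mutate_apply_left,
    mutate_apply_right, neg_neg]
  linear_combination B i k * max_zero_sub_max_neg_zero_eq_self (B k j)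
    - B k j * max_zero_sub_max_neg_zero_eq_self (B i k)

lemma transpose_mutate (k : ι) (B : Matrix ι ι ℤ) : (mutate k B)ᵀ = mutate k Bᵀ := by
  ext i j
  rw [transpose_apply]
  by_cases hi : i = k
  · subst hi; rw [mutate_apply_right, mutate_apply_left, transpose_apply]
  by_cases hj : j = k
  · subst hj; rw [mutate_apply_left, mutate_apply_right, transpose_apply]
  rw [mutate_apply_of_ne _ hj hi, mutate_apply_of_ne _ hi hj]
  simp only [transpose_apply]
  linear_combination B j k * max_zero_sub_max_neg_zero_eq_self (B k i)
    - B k i * max_zero_sub_max_neg_zero_eq_self (B j k)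

lemma Bmat_cons (B : Matrix ι ι ℤ) (k : ι) (w : List ι) :
    Bmat B (k :: w) = Bmat (mutate k B) w := rfl

lemma Bmat_append_singleton (B : Matrix ι ι ℤ) (w : List ι) (l : ι) :
    Bmat B (w ++ [l]) = mutate l (Bmat B w) := by
  simp [Bmat, List.foldl_append]

lemma Bmat_mutate_cons (B : Matrix ι ι ℤ) (k : ι) (w : List ι) :
    Bmat (mutate k B) (k :: w) = Bmat B w := by
  rw [Bmat_cons, mutate_mutate]

lemma Bmat_Bmat_reverse (B : Matrix ι ι ℤ) (w : List ι) : Bmat (Bmat B w) w.reverse = B := by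
  induction w using List.reverseRecOn with
  | nil => rfl
  | append_singleton u l ih =>
    rw [Bmat_append_singleton, List.reverse_append, List.reverse_singleton,
      List.singleton_append, Bmat_cons, mutate_mutate, ih]

lemma transpose_Bmat (B : Matrix ι ι ℤ) (w : List ι) : (Bmat B w)ᵀ = Bmat Bᵀ w := by
  induction w generalizing B with
  | nil => rfl
  | cons a w ih => rw [Bmat_cons, Bmat_cons, ih, transpose_mutate]

end Mutation

section Symmetrizer

variable {ι : Type*}

/-- Unlike `IsSkewSymmetrizable`, this fixes `D`, which then serves every `Bmat B w` at once. -/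
def IsSkewSymmetrizer (D : ι → ℚ) (B : Matrix ι ι ℤ) : Prop :=
  (∀ i, 0 < D i) ∧ ∀ i j, D i * (B i j : ℚ) = -(D j * (B j i : ℚ))

variable {D : ι → ℚ} {B : Matrix ι ι ℤ}

lemma IsSkewSymmetrizer.apply_self (hD : IsSkewSymmetrizer D B) (i : ι) : B i i = 0 := by
  have h := hD.2 i i
  have : (B i i : ℚ) = 0 := by nlinarith [hD.1 i]
  exact_mod_cast this

lemma IsSkewSymmetrizer.mul_max_neg (hD : IsSkewSymmetrizer D B) (σ : ℚ) (i j : ι) :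
    D i * max (-(σ * B i j)) 0 = D j * max (σ * B j i) 0 := by
  rw [mul_max_of_nonneg _ _ (hD.1 i).le, mul_max_of_nonneg _ _ (hD.1 j).le, mul_zero, mul_zero]
  congr 1
  linear_combination (-σ) * hD.2 i j

lemma IsSkewSymmetrizer.transpose (hD : IsSkewSymmetrizer D B) : IsSkewSymmetrizer D⁻¹ Bᵀ := by
  refine ⟨fun i => inv_pos.mpr (hD.1 i), fun i j => ?_⟩
  have := hD.2 j i
  have := (hD.1 i).ne'
  have := (hD.1 j).ne'
  simp only [Pi.inv_apply, transpose_apply]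
  field_simp
  linarith

variable [DecidableEq ι]

lemma IsSkewSymmetrizer.mutate (hD : IsSkewSymmetrizer D B) (k : ι) :
    IsSkewSymmetrizer D (mutate k B) := by
  refine ⟨hD.1, fun i j => ?_⟩
  have hmax := hD.mul_max_neg 1
  simp only [one_mul] at hmax
  by_cases hi : i = k
  · subst hi
    rw [mutate_apply_left, mutate_apply_right]
    push_cast
    linear_combination -hD.2 i j
  by_cases hj : j = k
  · subst hj
    rw [mutate_apply_right, mutate_apply_left]
    push_cast
    linear_combination -hD.2 i j
  rw [mutate_apply_of_ne B hi hj, mutate_apply_of_ne B hj hi]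
  push_cast
  linear_combination hD.2 i j + max (B k j : ℚ) 0 * hD.2 i k + (B k i : ℚ) * hmax j k
    + (B k j : ℚ) * hmax i k + max (B k i : ℚ) 0 * hD.2 j k

lemma IsSkewSymmetrizer.bmat (hD : IsSkewSymmetrizer D B) (w : List ι) :
    IsSkewSymmetrizer D (Bmat B w) := by
  induction w generalizing B with
  | nil => exact hD
  | cons a w ih => exact ih (hD.mutate a)

end Symmetrizer

section Patterns

variable {ι : Type*} [Fintype ι] [DecidableEq ι]

lemma Cmat_nil (B : Matrix ι ι ℤ) : Cmat B [] = 1 := rfl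

lemma Gmat_nil (B : Matrix ι ι ℤ) : Gmat B [] = 1 := rfl

lemma Cmat_append_singleton (B : Matrix ι ι ℤ) (w : List ι) (l : ι) :
    Cmat B (w ++ [l]) = Cstep (Bmat B w) (Cmat B w) l := by
  have hfst : ∀ (v : List ι) (B' C' : Matrix ι ι ℤ),
      (v.foldl (fun p k => (mutate k p.1, Cstep p.1 p.2 k)) (B', C')).1 = Bmat B' v := by
    intro v
    induction v with
    | nil => intro _ _; rfl
    | cons a v ih => intro B' C'; exact ih _ _
  rw [Cmat, List.foldl_append, List.foldl_cons, List.foldl_nil, hfst, Cmat]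

lemma Gmat_append_singleton (B : Matrix ι ι ℤ) (w : List ι) (l : ι) :
    Gmat B (w ++ [l]) = Gstep B (Bmat B w) (Cmat B w) (Gmat B w) l := by
  have hfst : ∀ (v : List ι) (B' C' G' : Matrix ι ι ℤ),
      (v.foldl (fun p k => (mutate k p.1, Cstep p.1 p.2.1 k, Gstep B p.1 p.2.1 p.2.2 k))
        (B', C', G')).1 = Bmat B' v ∧
      (v.foldl (fun p k => (mutate k p.1, Cstep p.1 p.2.1 k, Gstep B p.1 p.2.1 p.2.2 k))
        (B', C', G')).2.1 = (v.foldl (fun p k => (mutate k p.1, Cstep p.1 p.2 k)) (B', C')).2 := by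
    intro v
    induction v with
    | nil => intro _ _ _; exact ⟨rfl, rfl⟩
    | cons a v ih => intro B' C' G'; exact ih _ _ _
  rw [Gmat, List.foldl_append, List.foldl_cons, List.foldl_nil, (hfst _ _ _ _).1,
    (hfst _ _ _ _).2, ← Cmat, Gmat]

end Patterns

section Sign

variable {ι : Type*}

def HasSign (v : ι → ℤ) (ε : ℤ) : Prop := (ε = 1 ∧ ∀ i, 0 ≤ v i) ∨ (ε = -1 ∧ ∀ i, v i ≤ 0)

variable {v v' : ι → ℤ} {ε ε' : ℤ}

lemma HasSign.eq_of_apply_ne_zero (h : HasSign v ε) (h' : HasSign v' ε') {i : ι}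
    (hvi : v' i = v i) (hi : v i ≠ 0) : ε = ε' := by
  rcases h with ⟨rfl, h⟩ | ⟨rfl, h⟩ <;> rcases h' with ⟨rfl, h'⟩ | ⟨rfl, h'⟩
  all_goals first | rfl | (have := h i; have := h' i; omega)

lemma hasSign_of_single [DecidableEq ι] {k : ι} (hε : ε = 1 ∨ ε = -1)
    (hv : ∀ i, v i = if i = k then ε else 0) : HasSign v ε := by
  rcases hε with rfl | rfl
  · exact .inl ⟨rfl, fun i => by rw [hv i]; split <;> simp⟩
  · exact .inr ⟨rfl, fun i => by rw [hv i]; split <;> simp⟩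

lemma HasSign.eq_of_single [DecidableEq ι] (h : HasSign v ε) {k : ι} {x : ℤ}
    (hx : x = 1 ∨ x = -1) (hv : ∀ i, v i = if i = k then x else 0) : ε = x :=
  h.eq_of_apply_ne_zero (hasSign_of_single hx hv) rfl
    (by rw [hv k, if_pos rfl]; rcases hx with rfl | rfl <;> decide)

lemma ColSignCoherent.hasSign {M : Matrix ι ι ℤ} (h : ColSignCoherent M) (j : ι) :
    ∃ ε, HasSign (fun i => M i j) ε := by
  rcases h j with ⟨-, h⟩ | ⟨-, h⟩
  exacts [⟨1, .inl ⟨rfl, h⟩⟩, ⟨-1, .inr ⟨rfl, h⟩⟩]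

end Sign

section SignedMutationMatrices

variable {ι : Type*} [DecidableEq ι]

def Kmat (k : ι) (ε : ℤ) (B : Matrix ι ι ℤ) : Matrix ι ι ℤ := Jmat k + rowSel k (posPart (ε • B))

def Lmat (k : ι) (ε : ℤ) (B : Matrix ι ι ℤ) : Matrix ι ι ℤ := Jmat k + colSel k (posPart (ε • B))

lemma transpose_Kmat (k : ι) (ε : ℤ) (B : Matrix ι ι ℤ) : (Kmat k ε B)ᵀ = Lmat k ε Bᵀ := by
  rw [Kmat, Lmat, transpose_add, transpose_Jmat, transpose_rowSel, transpose_posPart,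
    transpose_smul]

lemma Kmat_mutate (k : ι) (ε : ℤ) (B : Matrix ι ι ℤ) : Kmat k ε (mutate k B) = Kmat k (-ε) B := by
  rw [Kmat, Kmat]
  congr 1
  ext i j
  by_cases hi : i = k
  · subst hi; simp [mutate_apply_left]
  · simp [hi]

lemma Kmat_eq_add (k : ι) (ε : ℤ) (B : Matrix ι ι ℤ) :
    Kmat k ε B = Kmat k (-ε) B + rowSel k (ε • B) := by
  rw [Kmat, Kmat, posPart_smul_eq_posPart_neg_smul_add, rowSel_add, add_assoc]

variable [Fintype ι]

lemma Kmat_mul_apply_of_ne {k i : ι} (ε : ℤ) (B X : Matrix ι ι ℤ) (hi : i ≠ k) (j : ι) :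
    (Kmat k ε B * X) i j = X i j := by
  rw [Kmat, add_mul, Matrix.add_apply, Jmat_mul_apply, rowSel_mul]
  simp [hi]

lemma mul_Lmat_apply_of_ne {l j : ι} (ε : ℤ) (X B : Matrix ι ι ℤ) (i : ι) (hj : j ≠ l) :
    (X * Lmat l ε B) i j = X i j := by
  rw [Lmat, mul_add, Matrix.add_apply, mul_Jmat_apply, mul_colSel]
  simp [hj]

lemma Kmat_mul_self {k : ι} (ε : ℤ) {B : Matrix ι ι ℤ} (hB : B k k = 0) :
    Kmat k ε B * Kmat k ε B = 1 := by
  set R := rowSel k (posPart (ε • B))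
  have hJR : Jmat k * R = -R := by
    ext i j; by_cases hi : i = k <;> simp [Jmat_mul_apply, R, hi]
  have hRJ : R * Jmat k = R := by
    ext i j
    by_cases hi : i = k <;> by_cases hj : j = k <;>
      simp [mul_Jmat_apply, R, hi, hj, hB, -zsmul_eq_mul]
  have hRR : R * R = 0 := by
    ext i j; by_cases hi : i = k <;> simp [mul_rowSel_apply, R, hi, hB, -zsmul_eq_mul]
  rw [Kmat, add_mul, mul_add, mul_add, Jmat_mul_Jmat, hJR, hRJ, hRR]
  abel

lemma Cstep_eq_mul_Kmat {l : ι} {σ : ℤ} (B : Matrix ι ι ℤ) {C : Matrix ι ι ℤ}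
    (hσ : HasSign (fun i => C i l) σ) : Cstep B C l = C * Kmat l σ B := by
  rcases hσ with ⟨rfl, hC⟩ | ⟨rfl, hC⟩
  · have : colSel l (posPart (-C)) = 0 := by
      ext i j; by_cases hj : j = l <;> simp [hj, hC i]
    rw [Cstep, this, zero_mul, add_zero, Kmat, one_smul, mul_add]
  · have : colSel l (posPart (-C)) = -colSel l C := by
      ext i j; by_cases hj : j = l <;> simp [hj, hC i]
    rw [Cstep, this, neg_mul, colSel_mul, Kmat, neg_smul, one_smul, ← posPart_neg_add_self B,
      rowSel_add]
    noncomm_ring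

lemma Gstep_eq_mul_Lmat {l : ι} {σ : ℤ} {B0 B C G : Matrix ι ι ℤ}
    (hσ : HasSign (fun i => C i l) σ) (hGB : G * B = B0 * C) :
    Gstep B0 B C G l = G * Lmat l (-σ) B := by
  rcases hσ with ⟨rfl, hC⟩ | ⟨rfl, hC⟩
  · have : colSel l (posPart (-C)) = 0 := by
      ext i j; by_cases hj : j = l <;> simp [hj, hC i]
    rw [Gstep, this, mul_zero, sub_zero, Lmat, neg_smul, one_smul, mul_add]
  · have : colSel l (posPart (-C)) = -colSel l C := by
      ext i j; by_cases hj : j = l <;> simp [hj, hC i]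
    rw [Gstep, this, mul_neg, sub_neg_eq_add, mul_colSel l B0, ← hGB, ← mul_colSel, Lmat, neg_neg,
      one_smul, ← posPart_neg_add_self B, colSel_add]
    noncomm_ring

lemma Lmat_mul_mutate {l : ι} {B : Matrix ι ι ℤ} (hB : B l l = 0) :
    Lmat l (-1) B * mutate l B = B * Kmat l 1 B := by
  ext i j
  rw [Lmat, Kmat, add_mul, mul_add, Matrix.add_apply, Matrix.add_apply, Jmat_mul_apply,
    mul_Jmat_apply, colSel_mul_apply, mul_rowSel_apply]
  simp only [neg_smul, one_smul, posPart_apply, Matrix.neg_apply]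
  by_cases hi : i = l
  · subst hi
    by_cases hj : j = i
    · subst hj; simp [mutate_apply_left, hB]
    · simp [mutate_apply_left, hB, hj]
  · by_cases hj : j = l
    · subst hj; simp [mutate_apply_right, hB, hi]
    · rw [if_neg hi, if_neg hj, mutate_apply_of_ne B hi hj, mutate_apply_left]
      ring

end SignedMutationMatrices

section Paths

variable {ι : Type*} {B : Matrix ι ι ℤ}

lemma IsSkewSymmetrizable.transpose (hB : IsSkewSymmetrizable B) : IsSkewSymmetrizable Bᵀ :=
  let ⟨D, hD⟩ := hB; ⟨D⁻¹, IsSkewSymmetrizer.transpose hD⟩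

lemma IsSkewSymmetrizable.apply_self (hB : IsSkewSymmetrizable B) (i : ι) : B i i = 0 :=
  let ⟨_, hD⟩ := hB; IsSkewSymmetrizer.apply_self hD i

variable [DecidableEq ι]

lemma IsSkewSymmetrizable.mutate (hB : IsSkewSymmetrizable B) (k : ι) :
    IsSkewSymmetrizable (mutate k B) :=
  let ⟨D, hD⟩ := hB; ⟨D, IsSkewSymmetrizer.mutate hD k⟩

lemma IsSkewSymmetrizable.bmat (hB : IsSkewSymmetrizable B) (w : List ι) :
    IsSkewSymmetrizable (Bmat B w) :=
  let ⟨D, hD⟩ := hB; ⟨D, IsSkewSymmetrizer.bmat hD w⟩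

lemma rowSel_mutate (k : ι) (B : Matrix ι ι ℤ) : rowSel k (mutate k B) = -rowSel k B := by
  ext i j; by_cases hi : i = k
  · subst hi; simp [mutate_apply_left]
  · simp [hi]

variable [Fintype ι]

lemma Gmat_mul_Bmat (hB : IsSkewSymmetrizable B) (w : List ι) :
    Gmat B w * Bmat B w = B * Cmat B w := by
  induction w using List.reverseRecOn with
  | nil => rw [Gmat_nil, Cmat_nil, one_mul, mul_one]; rfl
  | append_singleton u l ih =>
    rw [Gmat_append_singleton, Bmat_append_singleton, Cmat_append_singleton]
    have hflip : colSel l (posPart (-Cmat B u)) * mutate l (Bmat B u)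
        = -(colSel l (posPart (-Cmat B u)) * Bmat B u) := by
      rw [colSel_mul, colSel_mul, rowSel_mutate, mul_neg]
    calc Gstep B (Bmat B u) (Cmat B u) (Gmat B u) l * mutate l (Bmat B u)
        = Gmat B u * (Lmat l (-1) (Bmat B u) * mutate l (Bmat B u))
          - B * (colSel l (posPart (-Cmat B u)) * mutate l (Bmat B u)) := by
          rw [Gstep, Lmat, neg_smul, one_smul]; noncomm_ring
      _ = B * Cstep (Bmat B u) (Cmat B u) l := by
          rw [Lmat_mul_mutate ((hB.bmat u).apply_self l), hflip, ← mul_assoc, ih, Cstep, Kmat,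
            one_smul]
          noncomm_ring

lemma isUnit_Cmat (hB : IsSkewSymmetrizable B) (hcoh : ∀ w, ColSignCoherent (Cmat B w))
    (w : List ι) : IsUnit (Cmat B w) := by
  induction w using List.reverseRecOn with
  | nil => exact isUnit_one
  | append_singleton u l ih =>
    obtain ⟨σ, hσ⟩ := (hcoh u).hasSign l
    have hK := Kmat_mul_self σ ((hB.bmat u).apply_self l)
    rw [Cmat_append_singleton, Cstep_eq_mul_Kmat _ hσ]
    exact ih.mul ⟨⟨_, _, hK, hK⟩, rfl⟩

end Paths

section Units

variable {ι : Type*} [Fintype ι] [DecidableEq ι] {R : Type*} [CommRing R]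

lemma isUnit_apply_of_col_single {M : Matrix ι ι R} (hM : IsUnit M) {k l : ι}
    (hcol : ∀ i ≠ k, M i l = 0) : IsUnit (M k l) := by
  obtain ⟨N, hN⟩ := hM.exists_left_inv
  have h := congrFun (congrFun hN l) l
  rw [mul_apply_of_col_single N hcol, one_apply_eq] at h
  exact IsUnit.of_mul_eq_one_right _ h

lemma isUnit_apply_of_row_single {M : Matrix ι ι R} (hM : IsUnit M) {k l : ι}
    (hrow : ∀ j ≠ l, M k j = 0) : IsUnit (M k l) :=
  isUnit_apply_of_col_single (M := Mᵀ) ((isUnit_transpose M).mpr hM) hrow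

variable {K : Type*} [Field K]

lemma mul_diagonal_inv_mul_eq_diagonal_inv {A N : Matrix ι ι K} {d : ι → K} (hd : ∀ i, d i ≠ 0)
    (h : A * diagonal d * N = diagonal d) : N * diagonal d⁻¹ * A = diagonal d⁻¹ := by
  have hinv : diagonal d * diagonal d⁻¹ = 1 := by
    rw [diagonal_mul_diagonal, ← diagonal_one]; congr 1; ext i; simp [hd i]
  have hinv' : diagonal d⁻¹ * diagonal d = 1 := by
    rw [diagonal_mul_diagonal, ← diagonal_one]; congr 1; ext i; simp [hd i]
  have hleft : (diagonal d⁻¹ * A * diagonal d) * N = 1 := by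
    rw [show diagonal d⁻¹ * A * diagonal d * N = diagonal d⁻¹ * (A * diagonal d * N) by
      simp only [mul_assoc], h, hinv']
  calc N * diagonal d⁻¹ * A = N * (diagonal d⁻¹ * A * diagonal d) * diagonal d⁻¹ := by
        simp only [mul_assoc, hinv, mul_one]
    _ = diagonal d⁻¹ := by rw [mul_eq_one_comm.mp hleft, one_mul]

lemma row_single_of_mul_diagonal_mul_eq_diagonal {M N : Matrix ι ι K} {d e : ι → K}
    (h : M * diagonal d * N = diagonal e) {a b : ι} (he : e a ≠ 0) (hM : ∀ m ≠ b, M a m = 0) :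
    M a b * d b * N b a = e a ∧ ∀ j ≠ a, N b j = 0 := by
  have hentry : ∀ j, M a b * d b * N b j = diagonal e a j := by
    intro j
    rw [← h, mul_apply_of_row_single (l := b) (fun m hm => by rw [mul_diagonal, hM m hm, zero_mul]),
      mul_diagonal]
  have hab : M a b * d b * N b a = e a := by rw [hentry, diagonal_apply_eq]
  refine ⟨hab, fun j hj => ?_⟩
  have hj' := hentry j
  rw [diagonal_apply_ne _ hj.symm] at hj'
  have hne : M a b * d b ≠ 0 := fun h0 => he (by rw [← hab, h0, zero_mul])
  exact (mul_eq_zero.mp hj').resolve_left hne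

end Units

section SymmetrizerRelation

variable {ι : Type*} [Fintype ι] [DecidableEq ι]

def toRat : Matrix ι ι ℤ →+* Matrix ι ι ℚ := (Int.castRingHom ℚ).mapMatrix

@[simp] lemma toRat_apply (M : Matrix ι ι ℤ) (i j : ι) : toRat M i j = (M i j : ℚ) := rfl

variable {D : ι → ℚ} {B : Matrix ι ι ℤ}

lemma IsSkewSymmetrizer.diagonal_mul_Lmat (hD : IsSkewSymmetrizer D B) (l : ι) (σ : ℤ) :
    diagonal D * toRat (Lmat l (-σ) B) = (toRat (Kmat l σ B))ᵀ * diagonal D := by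
  ext i j
  rw [diagonal_mul, mul_diagonal, transpose_apply, toRat_apply, toRat_apply, Lmat, Kmat]
  by_cases hj : j = l
  · subst hj
    have := hD.mul_max_neg σ i j
    by_cases hij : i = j
    · subst hij; simp [Jmat_apply, hD.apply_self, -zsmul_eq_mul]
    · simp [Jmat_apply, hij, Ne.symm hij, -zsmul_eq_mul]
      linear_combination this
  · by_cases hij : i = j
    · subst hij; simp [Jmat_apply, hj]
    · simp [Jmat_apply, hij, Ne.symm hij, hj]

lemma IsSkewSymmetrizer.transpose_Cmat_mul_diagonal_mul_Gmat (hD : IsSkewSymmetrizer D B)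
    (hcoh : ∀ w, ColSignCoherent (Cmat B w)) (w : List ι) :
    (toRat (Cmat B w))ᵀ * diagonal D * toRat (Gmat B w) = diagonal D := by
  induction w using List.reverseRecOn with
  | nil => simp [Cmat_nil, Gmat_nil]
  | append_singleton u l ih =>
    obtain ⟨σ, hσ⟩ := (hcoh u).hasSign l
    have hBu := hD.bmat u
    rw [Cmat_append_singleton, Gmat_append_singleton, Cstep_eq_mul_Kmat _ hσ,
      Gstep_eq_mul_Lmat hσ (Gmat_mul_Bmat ⟨D, hD⟩ u), map_mul, map_mul, transpose_mul]
    calc (toRat (Kmat l σ (Bmat B u)))ᵀ * (toRat (Cmat B u))ᵀ * diagonal D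
          * (toRat (Gmat B u) * toRat (Lmat l (-σ) (Bmat B u)))
        = (toRat (Kmat l σ (Bmat B u)))ᵀ
          * ((toRat (Cmat B u))ᵀ * diagonal D * toRat (Gmat B u))
          * toRat (Lmat l (-σ) (Bmat B u)) := by simp only [mul_assoc]
      _ = (toRat (Kmat l σ (Bmat B u) * Kmat l σ (Bmat B u)))ᵀ * diagonal D := by
        rw [ih, mul_assoc, hBu.diagonal_mul_Lmat, map_mul, transpose_mul, mul_assoc]
      _ = diagonal D := by
        rw [Kmat_mul_self σ (hBu.apply_self l), map_one, transpose_one, one_mul]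

end SymmetrizerRelation

section SingleColumn

variable {ι : Type*} [Fintype ι] [DecidableEq ι]

lemma Kmat_mul_apply_of_col_single {k l : ι} (y : ℤ) {B C : Matrix ι ι ℤ} (hB : B k k = 0)
    (hC : ∀ i ≠ k, C i l = 0) (i : ι) :
    (Kmat k y B * C) i l = if i = k then -C k l else 0 := by
  by_cases hi : i = k
  · subst hi
    rw [mul_apply_of_col_single _ hC, if_pos rfl, Kmat]
    simp [Jmat_apply, hB, -zsmul_eq_mul]
  · rw [Kmat_mul_apply_of_ne _ _ _ hi, if_neg hi, hC i hi]

lemma mul_Lmat_apply_of_row_single {k l : ι} (y : ℤ) {G B : Matrix ι ι ℤ} (hB : B l l = 0)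
    (hG : ∀ j ≠ l, G k j = 0) (j : ι) :
    (G * Lmat l y B) k j = if j = l then -G k l else 0 := by
  by_cases hj : j = l
  · subst hj
    rw [mul_apply_of_row_single hG, if_pos rfl, Lmat]
    simp [Jmat_apply, hB, -zsmul_eq_mul]
  · rw [mul_Lmat_apply_of_ne _ _ _ _ hj, if_neg hj, hG j hj]

lemma mul_Kmat_apply_self_row {l : ι} (y : ℤ) {B : Matrix ι ι ℤ} (hB : B l l = 0) (j : ι) :
    (B * Kmat l y B) l j = B l j := by
  rw [Kmat, mul_add, Matrix.add_apply, mul_Jmat_apply, mul_rowSel_apply, hB, zero_mul, add_zero]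
  split_ifs with hj
  · rw [hj, hB, neg_zero]
  · rfl

/-- Splitting `Kmat k x B = Kmat k (-x) B + rowSel k (x • B)` and likewise on the right, the two
cross terms live in row `k` and are `∓ x • (C k l) • (row l of B')`; they cancel because
`B C = G B'` and `C k l = G k l`. -/
lemma Kmat_mul_mul_Kmat_of_single {k l : ι} (x : ℤ) {B B' C G : Matrix ι ι ℤ}
    (hB : B k k = 0) (hB' : B' l l = 0) (hGB : G * B' = B * C) (hC : ∀ i ≠ k, C i l = 0)
    (hG : ∀ j ≠ l, G k j = 0) (hCG : C k l = G k l) :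
    Kmat k (-x) B * C * Kmat l (-x) B' = Kmat k x B * (C * Kmat l x B') := by
  have hcross : Kmat k (-x) B * C * rowSel l (x • B') + rowSel k (x • B) * (C * Kmat l x B')
      = 0 := by
    ext i j
    rw [Matrix.add_apply, mul_rowSel_apply, rowSel_mul, rowSel_apply,
      Kmat_mul_apply_of_col_single _ hB hC, Matrix.zero_apply]
    split_ifs with hi
    · subst hi
      rw [Matrix.smul_mul, ← mul_assoc, ← hGB, mul_assoc]
      simp only [Matrix.smul_apply, smul_eq_mul]
      rw [mul_apply_of_row_single hG, mul_Kmat_apply_self_row _ hB', hCG]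
      ring
    · simp
  calc Kmat k (-x) B * C * Kmat l (-x) B'
      = Kmat k (-x) B * C * Kmat l (-x) B'
        + (Kmat k (-x) B * C * rowSel l (x • B') + rowSel k (x • B) * (C * Kmat l x B')) := by
        rw [hcross, add_zero]
    _ = (Kmat k (-x) B + rowSel k (x • B)) * (C * Kmat l x B') := by
        rw [Kmat_eq_add l x B']; noncomm_ring
    _ = Kmat k x B * (C * Kmat l x B') := by rw [← Kmat_eq_add]

end SingleColumn

section Duality

variable {ι : Type*} [Fintype ι] [DecidableEq ι]

/-- Tropical duality at the vertex `t` reached along `w`: `G_t^{B;t₀} = (C_{t₀}^{B_tᵀ;t})ᵀ`. -/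
def DualityAt (B : Matrix ι ι ℤ) (w : List ι) : Prop :=
  Gmat B w = (Cmat (Bmat B w)ᵀ w.reverse)ᵀ

/-- Only the `C`-half of the dual mutation formula; the `G`-half follows from `DualityAt`
(`Gmat_mutate_cons`). -/
def DualMutationAt (B : Matrix ι ι ℤ) (w : List ι) : Prop :=
  ∀ k ε, HasSign (Gmat B w k) ε → Cmat (mutate k B) (k :: w) = Kmat k (-ε) B * Cmat B w

def SignCoherence (ι : Type*) [Fintype ι] [DecidableEq ι] : Prop :=
  ∀ B : Matrix ι ι ℤ, IsSkewSymmetrizable B → ∀ w, ColSignCoherent (Cmat B w)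

variable {B : Matrix ι ι ℤ} {w : List ι}

lemma DualityAt.hasSign_row (hsc : SignCoherence ι) (hB : IsSkewSymmetrizable B)
    (h : DualityAt B w) (k : ι) : ∃ ε, HasSign (Gmat B w k) ε := by
  rw [h]
  exact (hsc _ (hB.bmat w).transpose w.reverse).hasSign k

lemma DualityAt.isUnit (hsc : SignCoherence ι) (hB : IsSkewSymmetrizable B)
    (h : DualityAt B w) : IsUnit (Gmat B w) := by
  rw [h, isUnit_transpose]
  exact isUnit_Cmat (hB.bmat w).transpose (hsc _ (hB.bmat w).transpose) _

lemma Cmat_col_single_of_Gmat_row_single (hB : IsSkewSymmetrizable B)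
    (hcoh : ∀ w, ColSignCoherent (Cmat B w)) {k l : ι} (hG : ∀ j ≠ l, Gmat B w k j = 0) :
    ∀ i ≠ k, Cmat B w i l = 0 := by
  obtain ⟨D, hD⟩ : ∃ D, IsSkewSymmetrizer D B := hB
  have hinv := mul_diagonal_inv_mul_eq_diagonal_inv (fun i => (hD.1 i).ne')
    (hD.transpose_Cmat_mul_diagonal_mul_Gmat hcoh w)
  have hrow := (row_single_of_mul_diagonal_mul_eq_diagonal hinv (a := k) (b := l)
    (by simp [(hD.1 k).ne']) (fun m hm => by simp [hG m hm])).2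
  intro i hi
  simpa using hrow i hi

lemma DualityAt.Gmat_row_single_of_Cmat_col_single (hsc : SignCoherence ι)
    (hB : IsSkewSymmetrizable B) (h : DualityAt B w) {k l : ι} (hC : ∀ i ≠ k, Cmat B w i l = 0) :
    (∀ j ≠ l, Gmat B w k j = 0) ∧ Gmat B w k l = Cmat B w k l ∧
      (Cmat B w k l = 1 ∨ Cmat B w k l = -1) := by
  obtain ⟨D, hD⟩ : ∃ D, IsSkewSymmetrizer D B := id hB
  obtain ⟨hval, hrow⟩ := row_single_of_mul_diagonal_mul_eq_diagonal
    (hD.transpose_Cmat_mul_diagonal_mul_Gmat (hsc B hB) w) (a := l) (b := k)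
    (hD.1 l).ne' (fun m hm => by simp [hC m hm])
  have hG : ∀ j ≠ l, Gmat B w k j = 0 := fun j hj => by simpa using hrow j hj
  simp only [transpose_apply, toRat_apply] at hval
  have hpos : 0 < Cmat B w k l * Gmat B w k l := by
    have : (0 : ℚ) < Cmat B w k l * Gmat B w k l := by
      by_contra hneg
      nlinarith [hD.1 k, hD.1 l]
    exact_mod_cast this
  have hc := Int.isUnit_iff.mp (isUnit_apply_of_col_single (isUnit_Cmat hB (hsc B hB) w) hC)
  have hg := Int.isUnit_iff.mp (isUnit_apply_of_row_single (h.isUnit hsc hB) hG)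
  refine ⟨hG, ?_, hc⟩
  rcases hc with hc | hc <;> rcases hg with hg | hg <;> rw [hc, hg] at hpos ⊢ <;> norm_num at hpos

lemma dualityAt_nil (B : Matrix ι ι ℤ) : DualityAt B [] := by
  simp [DualityAt, Gmat_nil, Cmat_nil]

lemma dualMutationAt_nil (B : Matrix ι ι ℤ) : DualMutationAt B [] := by
  intro k ε hε
  obtain rfl : ε = 1 := by
    rcases hε with ⟨rfl, -⟩ | ⟨rfl, hε⟩
    · rfl
    · simpa [Gmat_nil] using hε k
  have hcol : HasSign (fun i => (1 : Matrix ι ι ℤ) i k) 1 :=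
    hasSign_of_single (k := k) (Or.inl rfl) fun i => by simp [one_apply]
  rw [← List.nil_append [k], Cmat_append_singleton, Cmat_nil, Bmat, List.foldl_nil,
    Cstep_eq_mul_Kmat _ hcol, Kmat_mutate, one_mul, Cmat_nil, mul_one]

lemma DualityAt.append_singleton (hsc : SignCoherence ι) (hB : IsSkewSymmetrizable B)
    {u : List ι} (h : DualityAt B u)
    (hT : DualityAt (Bmat B u)ᵀ u.reverse) (hTmut : DualMutationAt (Bmat B u)ᵀ u.reverse)
    (l : ι) : DualityAt B (u ++ [l]) := by
  obtain ⟨σ, hσ⟩ := (hsc B hB u).hasSign l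
  have hGT : Gmat (Bmat B u)ᵀ u.reverse = (Cmat B u)ᵀ := by
    rw [hT, ← transpose_Bmat, Bmat_Bmat_reverse, transpose_transpose, List.reverse_reverse]
  have hCT : Cmat (Bmat B u)ᵀ u.reverse = (Gmat B u)ᵀ := by rw [h, transpose_transpose]
  have hmut := hTmut l σ (by rw [hGT]; exact hσ)
  rw [DualityAt, Gmat_append_singleton, Gstep_eq_mul_Lmat hσ (Gmat_mul_Bmat hB u),
    Bmat_append_singleton, transpose_mutate, List.reverse_append, List.reverse_singleton,
    List.singleton_append, hmut, hCT, transpose_mul, transpose_transpose, transpose_Kmat,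
    transpose_transpose]

/-- Moving one step along the path keeps the dual mutation formula: if the `l`-th column of
`C_t` has a nonzero entry off row `k`, the `C`-matrices from `t₀` and `t₁` mutate with the same
sign and the sign of the `k`-th row of `G_t` is unchanged; otherwise that column is `±e_k`, the
`k`-th row of `G_t` is `±e_l` with the same sign, and both signs flip. -/
lemma DualMutationAt.append_singleton (hsc : SignCoherence ι) (hB : IsSkewSymmetrizable B)
    {u : List ι} (hdual : DualityAt B u) (h : DualMutationAt B u) (l : ι) :
    DualMutationAt B (u ++ [l]) := by
  intro k ε' hε'
  obtain ⟨ε, hε⟩ := hdual.hasSign_row hsc hB k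
  obtain ⟨σ, hσ⟩ := (hsc B hB u).hasSign l
  obtain ⟨σ₁, hσ₁⟩ := (hsc _ (hB.mutate k) (k :: u)).hasSign l
  have hC₁ := h k ε hε
  have hBu := (hB.bmat u).apply_self l
  have hC₁col : ∀ i ≠ k, Cmat (mutate k B) (k :: u) i l = Cmat B u i l := fun i hi => by
    rw [hC₁, Kmat_mul_apply_of_ne _ _ _ hi]
  rw [← List.cons_append, Cmat_append_singleton, Bmat_mutate_cons, Cstep_eq_mul_Kmat _ hσ₁, hC₁,
    Cmat_append_singleton, Cstep_eq_mul_Kmat _ hσ]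
  rw [Gmat_append_singleton, Gstep_eq_mul_Lmat hσ (Gmat_mul_Bmat hB u)] at hε'
  by_cases hsingle : ∀ i ≠ k, Cmat B u i l = 0
  · obtain ⟨hGrow, hGC, hx⟩ := hdual.Gmat_row_single_of_Cmat_col_single hsc hB hsingle
    have hCx := Kmat_mul_apply_of_col_single (-ε) (hB.apply_self k) hsingle
    have hGx := mul_Lmat_apply_of_row_single (-σ) hBu hGrow
    set x := Cmat B u k l
    have hneg : -x = 1 ∨ -x = -1 := by rcases hx with hx | hx <;> simp [hx]
    obtain rfl : σ = x := hσ.eq_of_single (k := k) hx fun i => by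
      by_cases hi : i = k <;> simp [hi, hsingle, x]
    obtain rfl : ε = x := hε.eq_of_single (k := l) hx fun j => by
      by_cases hj : j = l <;> simp [hj, hGrow, hGC]
    obtain rfl : σ₁ = -x := hσ₁.eq_of_single (k := k) hneg fun i => by rw [hC₁, hCx]
    obtain rfl : ε' = -x := hε'.eq_of_single (k := l) hneg fun j => by rw [hGx, hGC]
    rw [neg_neg]
    exact Kmat_mul_mul_Kmat_of_single x (hB.apply_self k) hBu (Gmat_mul_Bmat hB u) hsingle hGrow
      hGC.symm
  · push Not at hsingle
    obtain ⟨i, hik, hi⟩ := hsingle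
    obtain rfl : σ = σ₁ := hσ.eq_of_apply_ne_zero hσ₁ (hC₁col i hik) hi
    obtain ⟨j, hjl, hj⟩ : ∃ j ≠ l, Gmat B u k j ≠ 0 := by
      by_contra! hrow
      exact hi (Cmat_col_single_of_Gmat_row_single hB (hsc B hB) hrow i hik)
    obtain rfl : ε = ε' := hε.eq_of_apply_ne_zero hε' (mul_Lmat_apply_of_ne _ _ _ _ hjl) hj
    rw [mul_assoc]

lemma dualMutationAt_of_dualityAt (hsc : SignCoherence ι) (hB : IsSkewSymmetrizable B)
    (w : List ι) (hdual : ∀ v, v <+: w → DualityAt B v) : DualMutationAt B w := by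
  induction w using List.reverseRecOn with
  | nil => exact dualMutationAt_nil B
  | append_singleton u l ih =>
    have hu : u <+: u ++ [l] := List.prefix_append u [l]
    exact (ih fun v hv => hdual v (hv.trans hu)).append_singleton hsc hB (hdual u hu) l

/-- Strong induction on the length: the step for `u ++ [l]` uses `DualityAt` and
`DualMutationAt` for `(Bmat B u)ᵀ` along `u.reverse`. -/
theorem dualityAt (hsc : SignCoherence ι) (hB : IsSkewSymmetrizable B) (w : List ι) :
    DualityAt B w := by
  obtain ⟨n, hn⟩ : ∃ n, w.length = n := ⟨_, rfl⟩
  induction n using Nat.strong_induction_on generalizing B w with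
  | _ n ih =>
    cases w using List.reverseRecOn with
    | nil => exact dualityAt_nil B
    | append_singleton u l =>
      have hlt : u.length < n := by simp [← hn]
      have hBT := (hB.bmat u).transpose
      have hT : ∀ v, v <+: u.reverse → DualityAt (Bmat B u)ᵀ v := fun v hv =>
        ih _ (lt_of_le_of_lt (by simpa using hv.length_le) hlt) hBT v rfl
      exact (ih _ hlt hB u rfl).append_singleton hsc hB (hT _ List.prefix_rfl)
        (dualMutationAt_of_dualityAt hsc hBT _ hT) l

lemma Gmat_mutate_cons {w : List ι} {k : ι} {ε : ℤ} (h₀ : DualityAt B w)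
    (h₁ : DualityAt (mutate k B) (k :: w)) (hε : HasSign (Gmat B w k) ε) :
    Gmat (mutate k B) (k :: w) = Lmat k ε B * Gmat B w := by
  have hCT : Cmat (Bmat B w)ᵀ w.reverse = (Gmat B w)ᵀ := by rw [h₀, transpose_transpose]
  rw [h₁, Bmat_mutate_cons, List.reverse_cons, Cmat_append_singleton, ← transpose_Bmat,
    Bmat_Bmat_reverse, hCT, Cstep_eq_mul_Kmat _ hε, transpose_mul, transpose_transpose,
    transpose_Kmat, transpose_transpose]

end Duality

theorem dual_mutation_general (n : ℕ)
    (hsc : ∀ B : Matrix (Fin n) (Fin n) ℤ, IsSkewSymmetrizable B →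
      ∀ w : List (Fin n), ColSignCoherent (Cmat B w))
    (B0 : Matrix (Fin n) (Fin n) ℤ) (hB0 : IsSkewSymmetrizable B0)
    (k : Fin n) (w : List (Fin n)) (ε : ℤ)
    (hε : (ε = 1 ∧ ∀ j, 0 ≤ Gmat B0 w k j) ∨ (ε = -1 ∧ ∀ j, Gmat B0 w k j ≤ 0)) :
    Cmat (mutate k B0) (k :: w) = (Jmat k + rowSel k (posPart ((-ε) • B0))) * Cmat B0 w ∧
    Gmat (mutate k B0) (k :: w) = (Jmat k + colSel k (posPart (ε • B0))) * Gmat B0 w :=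
  ⟨dualMutationAt_of_dualityAt hsc hB0 w (fun v _ => dualityAt hsc hB0 v) k ε hε,
    Gmat_mutate_cons (dualityAt hsc hB0 w) (dualityAt hsc (hB0.mutate k) (k :: w)) hε⟩

/-- **Dual mutation formulas** for the `C`- and `G`-matrices upon changing the
initial vertex from `t₀` to the adjacent vertex `t₁` (initial matrix `μ_k(B⁰)`). -/
theorem dual_mutation (n : ℕ) (hn : 1 ≤ n)
    (hsc : ∀ B : Matrix (Fin n) (Fin n) ℤ, IsSkewSymmetrizable B →
      ∀ w : List (Fin n), ColSignCoherent (Cmat B w))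
    (B0 : Matrix (Fin n) (Fin n) ℤ) (hB0 : IsSkewSymmetrizable B0)
    (k : Fin n) (w : List (Fin n)) (ε : ℤ)
    (hε : (ε = 1 ∧ ∀ j, 0 ≤ Gmat B0 w k j) ∨ (ε = -1 ∧ ∀ j, Gmat B0 w k j ≤ 0)) :
    Cmat (mutate k B0) (k :: w) = (Jmat k + rowSel k (posPart ((-ε) • B0))) * Cmat B0 w ∧
    Gmat (mutate k B0) (k :: w) = (Jmat k + colSel k (posPart (ε • B0))) * Gmat B0 w :=
  dual_mutation_general n hsc B0 hB0 k w ε hε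

end ClusterPattern
end

section
/- Let B̄⁰ be the principal extension of B⁰, and consider the rank-2n pattern with initial matrix B̄⁰ along a path w with entries in {1,…,n}. Then for every vertex t on such a path: the C-matrix C̄_t has block form [[C_t, Z_t],[0, I]] for some n×n integer matrix Z_t; the G-matrix satisfies Ḡ_t = [[G_t, 0],[0, I]]; and the F-polynomials satisfy F̄_{i;t} = F_{i;t} (as rational functions, with F_{i;t} viewed in ℚ(y₁,…,y_{2n}) via y₁,…,yₙ) for 1 ≤ i ≤ n, while F̄_{i;t} = 1 for n+1 ≤ i ≤ 2n. Moreover, if every C-matrix C_s of the rank-n pattern is column sign-coherent, then Z_t = 0. -/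
open Matrix

namespace ClusterPattern

variable {ι : Type*} [Fintype ι] [DecidableEq ι]

/-- The ambient field `ℚ(y_i : i ∈ ι)`. -/
abbrev RF (ι : Type*) := FractionRing (MvPolynomial ι ℚ)

/-- The generator `y_i` (or `x_i`) of the ambient rational function field. -/
noncomputable def gen (i : ι) : RF ι := algebraMap (MvPolynomial ι ℚ) (RF ι) (MvPolynomial.X i)

/-- One mutation step of the `F`-polynomials. -/
noncomputable def Fstep (B C : Matrix ι ι ℤ) (F : ι → RF ι) (k : ι) : ι → RF ι :=
  fun i => if i = k then
      ((∏ j, gen j ^ max (C j k) 0) * ∏ j, F j ^ max (B j k) 0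
        + (∏ j, gen j ^ max (-C j k) 0) * ∏ j, F j ^ max (-B j k) 0) / F k
    else F i

/-- The `F`-polynomials (as rational functions) at the vertex reached along `w`. -/
noncomputable def Fpoly (B0 : Matrix ι ι ℤ) (w : List ι) : ι → RF ι :=
  (w.foldl (fun p k => (mutate k p.1, Cstep p.1 p.2.1 k, Fstep p.1 p.2.1 p.2.2 k))
    ((B0, 1, fun _ => 1) : Matrix ι ι ℤ × Matrix ι ι ℤ × (ι → RF ι))).2.2

/-- One mutation step of the `x`-variables. -/
noncomputable def xstep (B : Matrix ι ι ℤ) (x : ι → RF ι) (k : ι) : ι → RF ι :=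
  fun i => if i = k then
      (x k)⁻¹ * (∏ j, x j ^ max (-B j k) 0) * (1 + ∏ j, x j ^ B j k)
    else x i

/-- The `x`-variables (cluster variables) at the vertex reached along `w`. -/
noncomputable def xvar (B0 : Matrix ι ι ℤ) (w : List ι) : ι → RF ι :=
  (w.foldl (fun p k => (mutate k p.1, xstep p.1 p.2 k))
    ((B0, fun i => gen i) : Matrix ι ι ℤ × (ι → RF ι))).2

/-- One mutation step of the `y`-variables. -/
noncomputable def ystep (B : Matrix ι ι ℤ) (yv : ι → RF ι) (k : ι) : ι → RF ι :=
  fun i => if i = k then (yv k)⁻¹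
    else yv i * yv k ^ max (B k i) 0 * (1 + yv k) ^ (-B k i)

/-- The `y`-variables at the vertex reached along `w`. -/
noncomputable def yvar (B0 : Matrix ι ι ℤ) (w : List ι) : ι → RF ι :=
  (w.foldl (fun p k => (mutate k p.1, ystep p.1 p.2 k))
    ((B0, fun i => gen i) : Matrix ι ι ℤ × (ι → RF ι))).2

/-- The embedding `ℚ(y₁,…,yₙ) → ℚ(y₁,…,y_{2n})` sending `y_i` to `y_i`. -/
noncomputable def extHom (n : ℕ) : RF (Fin n) →+* RF (Fin n ⊕ Fin n) :=
  IsFractionRing.lift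
    (g := (algebraMap (MvPolynomial (Fin n ⊕ Fin n) ℚ) (RF (Fin n ⊕ Fin n))).comp
      (MvPolynomial.rename (Sum.inl : Fin n → Fin n ⊕ Fin n)).toRingHom)
    ((IsFractionRing.injective (MvPolynomial (Fin n ⊕ Fin n) ℚ) (RF (Fin n ⊕ Fin n))).comp
      (MvPolynomial.rename_injective _ Sum.inl_injective))

/-! ### Auxiliary lemmas -/

section Aux

lemma Cstep_apply (B C : Matrix ι ι ℤ) (k i j : ι) :
    Cstep B C k i j = (if j = k then -C i j else C i j)
      + C i k * max (B k j) 0 + max (-C i k) 0 * B k j := by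
  simp only [Cstep, Matrix.add_apply]
  congr 1
  · congr 1
    · rw [Jmat, Matrix.mul_diagonal]
      split_ifs <;> ring
    · rw [Matrix.mul_apply, Finset.sum_eq_single k]
      · simp [rowSel, posPart]
      · intro b _ hb; simp [rowSel, posPart, hb]
      · simp
  · rw [Matrix.mul_apply, Finset.sum_eq_single k]
    · simp [colSel, posPart]
    · intro b _ hb; simp [colSel, posPart, hb]
    · simp

lemma mutate_skew {B : Matrix ι ι ℤ} {D : ι → ℚ} (hD : ∀ i, 0 < D i)
    (h : ∀ i j, D i * (B i j : ℚ) = -(D j * (B j i : ℚ))) (k : ι) :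
    ∀ i j, D i * ((mutate k B) i j : ℚ) = -(D j * ((mutate k B) j i : ℚ)) := by
  have key : ∀ a b : ι, 0 ≤ B a b → B b a ≤ 0 := by
    intro a b hab
    have h1 : (0 : ℚ) ≤ (B a b : ℚ) := by exact_mod_cast hab
    have h2 : (B b a : ℚ) ≤ 0 := by nlinarith [h a b, hD a, hD b]
    exact_mod_cast h2
  have key' : ∀ a b : ι, B a b ≤ 0 → 0 ≤ B b a := by
    intro a b hab
    have h1 : (B a b : ℚ) ≤ 0 := by exact_mod_cast hab
    have h2 : (0 : ℚ) ≤ (B b a : ℚ) := by nlinarith [h a b, hD a, hD b]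
    exact_mod_cast h2
  intro i j
  simp only [mutate, Matrix.of_apply]
  by_cases hc : i = k ∨ j = k
  · have hc' : j = k ∨ i = k := hc.symm
    rw [if_pos hc, if_pos hc']
    push_cast
    linarith [h i j]
  · have hc' : ¬(j = k ∨ i = k) := fun hx => hc hx.symm
    rw [if_neg hc, if_neg hc']
    rcases le_or_gt 0 (B k j) with hkj | hkj
    · have hjk : B j k ≤ 0 := key k j hkj
      rcases le_or_gt 0 (B i k) with hik | hik
      · have hki : B k i ≤ 0 := key i k hik
        rw [max_eq_left hkj, max_eq_right (neg_nonpos.mpr hik),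
          max_eq_right hki, max_eq_left (neg_nonneg.mpr hjk)]
        push_cast
        linear_combination h i j + (B k j : ℚ) * h i k - (B k i : ℚ) * h j k
      · have hki : 0 ≤ B k i := key' i k hik.le
        rw [max_eq_left hkj, max_eq_left (neg_nonneg.mpr hik.le),
          max_eq_left hki, max_eq_left (neg_nonneg.mpr hjk)]
        push_cast
        linear_combination h i j
    · have hjk : 0 ≤ B j k := key' k j hkj.le
      rcases le_or_gt 0 (B i k) with hik | hik
      · have hki : B k i ≤ 0 := key i k hik
        rw [max_eq_right hkj.le, max_eq_right (neg_nonpos.mpr hik),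
          max_eq_right hki, max_eq_right (neg_nonpos.mpr hjk)]
        push_cast
        linear_combination h i j
      · have hki : 0 ≤ B k i := key' i k hik.le
        rw [max_eq_right hkj.le, max_eq_left (neg_nonneg.mpr hik.le),
          max_eq_left hki, max_eq_right (neg_nonpos.mpr hjk)]
        push_cast
        linear_combination h i j - (B k j : ℚ) * h i k + (B k i : ℚ) * h j k

/-! #### Fold lemmas -/

lemma Bmat_append (B0 : Matrix ι ι ℤ) (w : List ι) (k : ι) :
    Bmat B0 (w ++ [k]) = mutate k (Bmat B0 w) := by
  simp [Bmat]

lemma fold2_fst (w : List ι) : ∀ (B C : Matrix ι ι ℤ),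
    (w.foldl (fun p k => (mutate k p.1, Cstep p.1 p.2 k)) (B, C)).1 = Bmat B w := by
  induction w with
  | nil => intro B C; rfl
  | cons k w ih => intro B C; simpa [Bmat] using ih (mutate k B) (Cstep B C k)

lemma Cmat_append (B0 : Matrix ι ι ℤ) (w : List ι) (k : ι) :
    Cmat B0 (w ++ [k]) = Cstep (Bmat B0 w) (Cmat B0 w) k := by
  simp only [Cmat, List.foldl_append, List.foldl_cons, List.foldl_nil]
  rw [fold2_fst]

lemma fold3_fst {α : Type*} (g : Matrix ι ι ℤ → Matrix ι ι ℤ → α → ι → α) (w : List ι) :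
    ∀ (B C : Matrix ι ι ℤ) (a : α),
    (w.foldl (fun p k => (mutate k p.1, Cstep p.1 p.2.1 k, g p.1 p.2.1 p.2.2 k)) (B, C, a)).1
      = Bmat B w := by
  induction w with
  | nil => intro B C a; rfl
  | cons k w ih => intro B C a; simpa [Bmat] using ih (mutate k B) (Cstep B C k) (g B C a k)

lemma fold3_snd {α : Type*} (g : Matrix ι ι ℤ → Matrix ι ι ℤ → α → ι → α) (w : List ι) :
    ∀ (B C : Matrix ι ι ℤ) (a : α),
    (w.foldl (fun p k => (mutate k p.1, Cstep p.1 p.2.1 k, g p.1 p.2.1 p.2.2 k)) (B, C, a)).2.1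
      = (w.foldl (fun p k => (mutate k p.1, Cstep p.1 p.2 k)) (B, C)).2 := by
  induction w with
  | nil => intro B C a; rfl
  | cons k w ih => intro B C a; simpa using ih (mutate k B) (Cstep B C k) (g B C a k)

lemma Gmat_append (B0 : Matrix ι ι ℤ) (w : List ι) (k : ι) :
    Gmat B0 (w ++ [k]) = Gstep B0 (Bmat B0 w) (Cmat B0 w) (Gmat B0 w) k := by
  simp only [Gmat, List.foldl_append, List.foldl_cons, List.foldl_nil]
  rw [fold3_fst (fun b c a k => Gstep B0 b c a k), fold3_snd (fun b c a k => Gstep B0 b c a k)]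
  rfl

lemma Fpoly_append (B0 : Matrix ι ι ℤ) (w : List ι) (k : ι) :
    Fpoly B0 (w ++ [k]) = Fstep (Bmat B0 w) (Cmat B0 w) (Fpoly B0 w) k := by
  simp only [Fpoly, List.foldl_append, List.foldl_cons, List.foldl_nil]
  rw [fold3_fst (fun b c a k => Fstep b c a k), fold3_snd (fun b c a k => Fstep b c a k)]
  rfl

/-! #### Block decomposition lemmas -/

lemma posPart_fromBlocks (A B C D : Matrix ι ι ℤ) :
    posPart (Matrix.fromBlocks A B C D)
      = Matrix.fromBlocks (posPart A) (posPart B) (posPart C) (posPart D) := by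
  ext i j
  cases i <;> cases j <;> rfl

lemma posPart_zero : posPart (0 : Matrix ι ι ℤ) = 0 := by
  ext i j; simp [posPart]

lemma colSel_zero (k : ι) : colSel k (0 : Matrix ι ι ℤ) = 0 := by
  ext i j; simp [colSel]

lemma rowSel_zero (k : ι) : rowSel k (0 : Matrix ι ι ℤ) = 0 := by
  ext i j; simp [rowSel]

lemma posPart_neg_one : posPart (-1 : Matrix ι ι ℤ) = 0 := by
  ext i j
  simp only [posPart, Matrix.of_apply, Matrix.neg_apply, Matrix.one_apply, Matrix.zero_apply]
  split_ifs <;> simp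

lemma rowSel_inl_fromBlocks (k : ι) (A B C D : Matrix ι ι ℤ) :
    rowSel (Sum.inl k) (Matrix.fromBlocks A B C D)
      = Matrix.fromBlocks (rowSel k A) (rowSel k B) 0 0 := by
  ext i j
  cases i <;> cases j <;> simp [rowSel, Matrix.fromBlocks]

lemma colSel_inl_fromBlocks (k : ι) (A B C D : Matrix ι ι ℤ) :
    colSel (Sum.inl k) (Matrix.fromBlocks A B C D)
      = Matrix.fromBlocks (colSel k A) 0 (colSel k C) 0 := by
  ext i j
  cases i <;> cases j <;> simp [colSel, Matrix.fromBlocks]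

lemma Jmat_inl (k : ι) :
    (Jmat (Sum.inl k) : Matrix (ι ⊕ ι) (ι ⊕ ι) ℤ) = Matrix.fromBlocks (Jmat k) 0 0 1 := by
  ext i j
  cases i <;> cases j <;>
    simp [Jmat, Matrix.diagonal, Matrix.fromBlocks, Matrix.one_apply, Sum.inl.injEq,
      Sum.inr.injEq] <;> aesop

end Aux

/-- The principal extension. -/
def pext (B0 : Matrix ι ι ℤ) : Matrix (ι ⊕ ι) (ι ⊕ ι) ℤ :=
  Matrix.fromBlocks B0 (-1) 1 0

lemma extHom_gen (n : ℕ) (i : Fin n) : extHom n (gen i) = gen (Sum.inl i) := by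
  unfold extHom gen
  rw [IsFractionRing.lift_algebraMap]
  simp [MvPolynomial.rename_X]

lemma pext_skew {n : ℕ} (B0 : Matrix (Fin n) (Fin n) ℤ) (D : Fin n → ℚ)
    (hsk : ∀ i j, D i * (B0 i j : ℚ) = -(D j * (B0 j i : ℚ))) :
    ∀ i j, Sum.elim D D i * ((pext B0) i j : ℚ)
      = -(Sum.elim D D j * ((pext B0) j i : ℚ)) := by
  rintro (i | i) (j | j) <;>
    simp only [pext, Matrix.fromBlocks_apply₁₁, Matrix.fromBlocks_apply₁₂,
      Matrix.fromBlocks_apply₂₁, Matrix.fromBlocks_apply₂₂, Sum.elim_inl, Sum.elim_inr,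
      Matrix.neg_apply, Matrix.one_apply, Matrix.zero_apply]
  · exact hsk i j
  · by_cases h : i = j
    · subst h; simp
    · have h' : ¬ j = i := fun hh => h hh.symm
      simp [h, h']
  · by_cases h : i = j
    · subst h; simp
    · have h' : ¬ j = i := fun hh => h hh.symm
      simp [h, h']
  · simp

lemma main_invariant {n : ℕ} (B0 : Matrix (Fin n) (Fin n) ℤ) (D : Fin n → ℚ)
    (hD : ∀ i, 0 < D i) (hsk : ∀ i j, D i * (B0 i j : ℚ) = -(D j * (B0 j i : ℚ)))
    (w : List (Fin n)) :
    (∀ i j, Sum.elim D D i * ((Bmat (pext B0) (w.map Sum.inl)) i j : ℚ)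
        = -(Sum.elim D D j * ((Bmat (pext B0) (w.map Sum.inl)) j i : ℚ))) ∧
    (∀ i j, Bmat (pext B0) (w.map Sum.inl) (Sum.inl i) (Sum.inl j) = Bmat B0 w i j) ∧
    (∀ i j, Bmat (pext B0) (w.map Sum.inl) (Sum.inr i) (Sum.inl j) = Cmat B0 w i j) ∧
    (∃ Z, Cmat (pext B0) (w.map Sum.inl) = Matrix.fromBlocks (Cmat B0 w) Z 0 1 ∧
      ((∀ w', ColSignCoherent (Cmat B0 w')) → Z = 0)) ∧
    (Gmat (pext B0) (w.map Sum.inl) = Matrix.fromBlocks (Gmat B0 w) 0 0 1) ∧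
    (∀ i, Fpoly (pext B0) (w.map Sum.inl) (Sum.inl i) = extHom n (Fpoly B0 w i)) ∧
    (∀ i, Fpoly (pext B0) (w.map Sum.inl) (Sum.inr i) = 1) := by
  induction w using List.reverseRecOn with
  | nil =>
    refine ⟨pext_skew B0 D hsk, ?_, ?_, ⟨0, ?_, fun _ => rfl⟩, ?_, ?_, ?_⟩
    · intro i j; rfl
    · intro i j; rfl
    · show (1 : Matrix _ _ ℤ) = _
      rw [← Matrix.fromBlocks_one]; rfl
    · show (1 : Matrix _ _ ℤ) = _
      rw [← Matrix.fromBlocks_one]; rfl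
    · intro i; exact ((extHom n).map_one).symm
    · intro i; rfl
  | append_singleton w k ih =>
    obtain ⟨ih1, ih2, ih3, ⟨Z, hZ, hZ0⟩, ihG, ihF1, ihF2⟩ := ih
    set v := w.map Sum.inl with hv
    have hmap : (w ++ [k]).map Sum.inl = v ++ [Sum.inl k] := by simp [hv]
    set B := Bmat B0 w with hB
    set C := Cmat B0 w with hC
    set G := Gmat B0 w with hG
    set F := Fpoly B0 w with hF
    set bB := Bmat (pext B0) v with hbB
    -- diagonal entries of B vanish
    have hdiag : B k k = 0 := by
      have h1 := ih1 (Sum.inl k) (Sum.inl k)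
      simp only [Sum.elim_inl] at h1
      rw [ih2 k k] at h1
      have h2 : (B k k : ℚ) = 0 := by
        have := hD k; nlinarith
      exact_mod_cast h2
    -- the blocks of bB
    set E : Matrix (Fin n) (Fin n) ℤ := Matrix.of fun i j => bB (Sum.inl i) (Sum.inr j) with hE
    set R : Matrix (Fin n) (Fin n) ℤ := Matrix.of fun i j => bB (Sum.inr i) (Sum.inr j) with hR
    have hsplit : bB = Matrix.fromBlocks B E C R := by
      ext i j
      cases i <;> cases j
      · exact ih2 _ _
      · rfl
      · exact ih3 _ _
      · rfl
    -- block form of the mutated big B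
    have hmut2 : ∀ i j, mutate (Sum.inl k) bB (Sum.inl i) (Sum.inl j) = mutate k B i j := by
      intro i j
      simp only [mutate, Matrix.of_apply, Sum.inl.injEq, ih2]
    have hmut3 : ∀ i j, mutate (Sum.inl k) bB (Sum.inr i) (Sum.inl j)
        = Cstep B C k i j := by
      intro i j
      rw [Cstep_apply]
      simp only [mutate, Matrix.of_apply, Sum.inl.injEq, Sum.inr.injEq,
        reduceCtorEq, false_or]
      by_cases hjk : j = k
      · subst hjk
        simp [ih3, hdiag]
      · simp [hjk, ih3, ih2]
    -- skewness relation for the E-block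
    have hECrel : ∀ l, D k * (E k l : ℚ) = -(D l * (C l k : ℚ)) := by
      intro l
      have h1 := ih1 (Sum.inl k) (Sum.inr l)
      simp only [Sum.elim_inl, Sum.elim_inr] at h1
      rwa [ih3 l k] at h1
    constructor
    · -- skew-symmetrizability
      rw [hmap, Bmat_append]
      exact mutate_skew (by rintro (i | i) <;> exact hD i) ih1 (Sum.inl k)
    refine ⟨?_, ?_, ?_, ?_, ?_, ?_⟩
    · intro i j
      rw [hmap, Bmat_append, Bmat_append]
      exact hmut2 i j
    · intro i j
      rw [hmap, Bmat_append, Cmat_append]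
      exact hmut3 i j
    · -- the C-matrix block form
      refine ⟨Z + C * rowSel k (posPart E) + colSel k (posPart (-C)) * E, ?_, ?_⟩
      · rw [hmap, Cmat_append, Cmat_append, ← hbB, ← hB, ← hC, hsplit, hZ]
        simp only [Cstep, Jmat_inl, rowSel_inl_fromBlocks, colSel_inl_fromBlocks,
          posPart_fromBlocks, Matrix.fromBlocks_neg, neg_zero, posPart_zero, posPart_neg_one,
          Matrix.fromBlocks_multiply, Matrix.fromBlocks_add]
        congr 1 <;> simp [colSel_zero, rowSel_zero, Matrix.mul_zero, Matrix.zero_mul,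
          Matrix.mul_one, Matrix.one_mul]
      · intro hcoh
        rw [hZ0 hcoh, zero_add]
        ext i j
        have hsum1 : (C * rowSel k (posPart E)) i j = C i k * max (E k j) 0 := by
          rw [Matrix.mul_apply, Finset.sum_eq_single k]
          · simp [rowSel, posPart]
          · intro b _ hb; simp [rowSel, posPart, hb]
          · simp
        have hsum2 : (colSel k (posPart (-C)) * E) i j = max (-C i k) 0 * E k j := by
          rw [Matrix.mul_apply, Finset.sum_eq_single k]
          · simp [colSel, posPart]
          · intro b _ hb; simp [colSel, posPart, hb]
          · simp
        rw [Matrix.add_apply, hsum1, hsum2]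
        rcases hcoh w k with hpos | hneg
        · have hik : 0 ≤ C i k := hpos.2 i
          have hjk : 0 ≤ C j k := hpos.2 j
          have hEkj : E k j ≤ 0 := by
            have h1 := hECrel j
            have h2 : (E k j : ℚ) ≤ 0 := by
              have := hD k; have := hD j
              have hjk' : (0 : ℚ) ≤ (C j k : ℚ) := by exact_mod_cast hjk
              nlinarith
            exact_mod_cast h2
          rw [max_eq_right hEkj, max_eq_right (neg_nonpos.mpr hik)]
          simp
        · have hik : C i k ≤ 0 := hneg.2 i
          have hjk : C j k ≤ 0 := hneg.2 j
          have hEkj : 0 ≤ E k j := by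
            have h1 := hECrel j
            have h2 : (0 : ℚ) ≤ (E k j : ℚ) := by
              have := hD k; have := hD j
              have hjk' : (C j k : ℚ) ≤ 0 := by exact_mod_cast hjk
              nlinarith
            exact_mod_cast h2
          rw [max_eq_left hEkj, max_eq_left (neg_nonneg.mpr hik)]
          simp only [Matrix.zero_apply]
          ring
    · -- the G-matrix block form
      rw [hmap, Gmat_append, Gmat_append, ← hbB, ← hB, ← hC, ← hG, hsplit, hZ, ihG]
      have hpext : pext B0 = Matrix.fromBlocks B0 (-1) 1 0 := rfl
      simp only [Gstep, Jmat_inl, colSel_inl_fromBlocks, posPart_fromBlocks,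
        Matrix.fromBlocks_neg, neg_zero, posPart_zero, posPart_neg_one, hpext,
        Matrix.fromBlocks_multiply, Matrix.fromBlocks_add]
      rw [show ∀ (X Y : Matrix (Fin n ⊕ Fin n) (Fin n ⊕ Fin n) ℤ), X - Y = X + -Y from
        fun X Y => sub_eq_add_neg X Y]
      simp only [Matrix.fromBlocks_neg, Matrix.fromBlocks_add]
      congr 1 <;> simp [Gstep, sub_eq_add_neg, colSel_zero, rowSel_zero, Matrix.mul_zero,
        Matrix.zero_mul, Matrix.mul_one, Matrix.one_mul]
    · -- F-polynomials at inl
      intro i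
      rw [hmap, Fpoly_append, Fpoly_append, ← hbB, ← hB, ← hC, ← hF]
      by_cases hik : i = k
      · subst hik
        simp only [Fstep, if_true]
        have hgen : ∀ (e : Fin n → ℤ),
            extHom n (∏ j, gen j ^ e j) = ∏ j, gen (Sum.inl j) ^ e j := by
          intro e
          rw [_root_.map_prod]
          exact Finset.prod_congr rfl fun j _ => by rw [map_zpow₀, extHom_gen]
        have hFmap : ∀ (e : Fin n → ℤ),
            extHom n (∏ j, F j ^ e j) = ∏ j, extHom n (F j) ^ e j := by
          intro e
          rw [_root_.map_prod]
          exact Finset.prod_congr rfl fun j _ => by rw [map_zpow₀]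
        rw [map_div₀, _root_.map_add, _root_.map_mul, _root_.map_mul, hgen, hgen, hFmap, hFmap]
        have hbCl : ∀ j, Cmat (pext B0) v (Sum.inl j) (Sum.inl i) = C j i := by
          intro j; rw [hZ]; rfl
        have hbCr : ∀ j, Cmat (pext B0) v (Sum.inr j) (Sum.inl i) = 0 := by
          intro j; rw [hZ]; rfl
        have hbBl : ∀ j, bB (Sum.inl j) (Sum.inl i) = B j i := fun j => ih2 j i
        rw [Fintype.prod_sum_type, Fintype.prod_sum_type, Fintype.prod_sum_type,
          Fintype.prod_sum_type]
        simp only [hbCl, hbCr, hbBl, ihF1, ihF2, neg_zero, max_self, zpow_zero, _root_.one_zpow,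
          Finset.prod_const_one, mul_one]
      · simp only [Fstep]
        rw [if_neg (by simpa using hik), if_neg hik]
        exact ihF1 i
    · -- F-polynomials at inr
      intro i
      rw [hmap, Fpoly_append, ← hbB]
      simp only [Fstep]
      rw [if_neg (by simp)]
      exact ihF2 i

/-- **Principal extension stability**: block forms of the `C`- and `G`-matrices and
stability of the `F`-polynomials for the principal extension `B̄⁰ = [[B⁰,−I],[I,0]]`,
and vanishing of the off-diagonal block under sign-coherence. -/
theorem principal_extension (n : ℕ) (hn : 1 ≤ n)
    (B0 : Matrix (Fin n) (Fin n) ℤ) (hB0 : IsSkewSymmetrizable B0)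
    (w : List (Fin n)) :
    (∃ Z : Matrix (Fin n) (Fin n) ℤ,
        Cmat (Matrix.fromBlocks B0 (-1 : Matrix (Fin n) (Fin n) ℤ) (1 : Matrix (Fin n) (Fin n) ℤ) (0 : Matrix (Fin n) (Fin n) ℤ)) (w.map Sum.inl) =
          Matrix.fromBlocks (Cmat B0 w) Z (0 : Matrix (Fin n) (Fin n) ℤ) (1 : Matrix (Fin n) (Fin n) ℤ)) ∧
    Gmat (Matrix.fromBlocks B0 (-1 : Matrix (Fin n) (Fin n) ℤ) (1 : Matrix (Fin n) (Fin n) ℤ) (0 : Matrix (Fin n) (Fin n) ℤ)) (w.map Sum.inl) =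
        Matrix.fromBlocks (Gmat B0 w) (0 : Matrix (Fin n) (Fin n) ℤ) (0 : Matrix (Fin n) (Fin n) ℤ) (1 : Matrix (Fin n) (Fin n) ℤ) ∧
    (∀ i : Fin n,
        Fpoly (Matrix.fromBlocks B0 (-1 : Matrix (Fin n) (Fin n) ℤ) (1 : Matrix (Fin n) (Fin n) ℤ) (0 : Matrix (Fin n) (Fin n) ℤ)) (w.map Sum.inl) (Sum.inl i) =
          extHom n (Fpoly B0 w i)) ∧
    (∀ i : Fin n,
        Fpoly (Matrix.fromBlocks B0 (-1 : Matrix (Fin n) (Fin n) ℤ) (1 : Matrix (Fin n) (Fin n) ℤ) (0 : Matrix (Fin n) (Fin n) ℤ)) (w.map Sum.inl) (Sum.inr i) = 1) ∧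
    ((∀ w' : List (Fin n), ColSignCoherent (Cmat B0 w')) →
        Cmat (Matrix.fromBlocks B0 (-1 : Matrix (Fin n) (Fin n) ℤ) (1 : Matrix (Fin n) (Fin n) ℤ) (0 : Matrix (Fin n) (Fin n) ℤ)) (w.map Sum.inl) =
          Matrix.fromBlocks (Cmat B0 w) (0 : Matrix (Fin n) (Fin n) ℤ) (0 : Matrix (Fin n) (Fin n) ℤ) (1 : Matrix (Fin n) (Fin n) ℤ)) := by
  obtain ⟨D, hD, hsk⟩ := hB0
  obtain ⟨_, _, _, ⟨Z, hZ, hZ0⟩, hGm, hF1, hF2⟩ := main_invariant B0 D hD hsk w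
  exact ⟨⟨Z, hZ⟩, hGm, hF1, hF2, fun hcoh => by rw [show Matrix.fromBlocks B0 (-1) 1 0
    = pext B0 from rfl, hZ, hZ0 hcoh]⟩

end ClusterPattern
end
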